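/- Let G = (ℕ × ℤ) be given the semiring structure with addition (a,b) + (c,d) = (max(a,c), b+d) when a,c > 0, and multiplication (a,b) × (c,d) = (a+c, b·d), restricted to the set S = ({0} × ℕ) ∪ (ℕ⁺ × ℤ). Then S with these operations is a commutative semiring: addition is commutative and associative with identity (0,0), multiplication is commutative and associative with identity (0,1), and multiplication distributes over addition. -/
import Mathlib

/-- The underlying set of the Grothendieck semiring `⨁ₖ 𝐊(RES_*)`. -/
def GSet : Set (ℕ × ℤ) := {p | (p.1 = 0 ∧ 0 ≤ p.2) ∨ 1 ≤ p.1}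

/-- Addition: `(a,b) + (c,d) = (max a c, b + d)`. -/
def gAdd (p q : ℕ × ℤ) : ℕ × ℤ := (max p.1 q.1, p.2 + q.2)

/-- Multiplication: `(a,b) × (c,d) = (a + c, b·d)`. -/
def gMul (p q : ℕ × ℤ) : ℕ × ℤ := (p.1 + q.1, p.2 * q.2)

/-- The set `S = ({0} × ℕ) ∪ (ℕ⁺ × ℤ)` with the operations
`(a,b)+(c,d) = (max(a,c), b+d)` and `(a,b)×(c,d) = (a+c, b·d)` is a commutative
semiring: both operations are closed on `S`, addition is commutative and associative
with identity `(0,0)`, multiplication is commutative and associative with identity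
`(0,1)`, and multiplication distributes over addition. -/
theorem stmt7 :
    (∀ p ∈ GSet, ∀ q ∈ GSet, gAdd p q ∈ GSet) ∧
    (∀ p ∈ GSet, ∀ q ∈ GSet, gMul p q ∈ GSet) ∧
    ((0, 0) : ℕ × ℤ) ∈ GSet ∧ ((0, 1) : ℕ × ℤ) ∈ GSet ∧
    (∀ p q : ℕ × ℤ, gAdd p q = gAdd q p) ∧
    (∀ p q r : ℕ × ℤ, gAdd (gAdd p q) r = gAdd p (gAdd q r)) ∧
    (∀ p : ℕ × ℤ, gAdd (0, 0) p = p) ∧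
    (∀ p q : ℕ × ℤ, gMul p q = gMul q p) ∧
    (∀ p q r : ℕ × ℤ, gMul (gMul p q) r = gMul p (gMul q r)) ∧
    (∀ p : ℕ × ℤ, gMul (0, 1) p = p) ∧
    (∀ p q r : ℕ × ℤ, gMul p (gAdd q r) = gAdd (gMul p q) (gMul p r)) := by
  refine ⟨?_, ?_, ?_, ?_, ?_, ?_, ?_, ?_, ?_, ?_, ?_⟩
  · rintro p (⟨h1, h2⟩ | h) q (⟨h3, h4⟩ | h')
    · exact Or.inl ⟨by simp [gAdd, h1, h3], add_nonneg h2 h4⟩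
    · exact Or.inr (le_max_of_le_right h')
    · exact Or.inr (le_max_of_le_left h)
    · exact Or.inr (le_max_of_le_left h)
  · rintro p (⟨h1, h2⟩ | h) q (⟨h3, h4⟩ | h')
    · exact Or.inl ⟨by simp [gMul, h1, h3], mul_nonneg h2 h4⟩
    · exact Or.inr (le_add_of_nonneg_of_le (Nat.zero_le _) h')
    · exact Or.inr (le_add_of_le_of_nonneg h (Nat.zero_le _))
    · exact Or.inr (le_add_of_le_of_nonneg h (Nat.zero_le _))
  · exact Or.inl ⟨rfl, le_refl 0⟩
  · exact Or.inl ⟨rfl, zero_le_one⟩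
  · intro p q; simp [gAdd, max_comm, add_comm]
  · intro p q r; simp [gAdd, max_assoc, add_assoc]
  · intro p; simp [gAdd]
  · intro p q; simp [gMul, Nat.add_comm, mul_comm]
  · intro p q r; simp [gMul, Nat.add_assoc, mul_assoc]
  · intro p; simp [gMul]
  · intro p q r; simp [gMul, gAdd, mul_add, Nat.add_max_add_left]
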